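/- With the purely imaginary parameter setting of the context, let S be the (n+1)×(n+1) complex matrix whose columns are ξ_0, ξ_1, …, ξ_n. Then det(S) = (−1/ζ)^{n(n+1)/2}·∏_{j=1}^n (sin ω_j)^j, and in particular det(S) ≠ 0, so ξ_0, ξ_1, …, ξ_n form a basis of ℂ^{n+1}. -/

import Mathlib

open Complex Matrix Finset

noncomputable section

/-- Index type for `(n+1)×(n+1)` matrices: a `1`-block plus an `n`-block. -/
abbrev Idx (n : ℕ) := Fin 1 ⊕ Fin n

/-- `ζ = 2·Im(λ0)/(n+1)`. -/
def zeta (n : ℕ) (l0 : ℂ) : ℝ := 2 * l0.im / (n + 1)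

/-- `ω_j = jπ/(n+1)`. -/
def om (n j : ℕ) : ℝ := j * Real.pi / (n + 1)

/-- `a_j = ζ·csc(ω_j)` for `j = 1,…,n` (indexed by `j : Fin n` as `j+1`). -/
def aa (n : ℕ) (l0 : ℂ) (j : Fin n) : ℝ := zeta n l0 / Real.sin (om n ((j : ℕ) + 1))

/-- `b_j = ζ·cot(ω_j) − 2·Re(λ0)` for `j = 1,…,n`. -/
def bb (n : ℕ) (l0 : ℂ) (j : Fin n) : ℝ :=
  zeta n l0 * (Real.cos (om n ((j : ℕ) + 1)) / Real.sin (om n ((j : ℕ) + 1))) - 2 * l0.re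

/-- `z0 = 2·Re(λ0) + i·ζ`. -/
def zz0 (n : ℕ) (l0 : ℂ) : ℂ := 2 * l0.re + Complex.I * zeta n l0

/-- The `(n+1)×(n+1)` matrix `B` with `(1,1)` entry `i·n·ζ`, first row/column entries `a_j`,
diagonal entries `−(z0 + b_j)` and all other entries `0`. -/
def Bmat (n : ℕ) (l0 : ℂ) : Matrix (Idx n) (Idx n) ℂ :=
  Matrix.fromBlocks
    (Matrix.of fun _ _ => Complex.I * n * zeta n l0)
    (Matrix.of fun _ j => (aa n l0 j : ℂ))
    (Matrix.of fun i _ => (aa n l0 i : ℂ))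
    (Matrix.diagonal fun j => -(zz0 n l0 + (bb n l0 j : ℂ)))

/-- The vector `ξ_0 = (1, a_1/(z0+b_1), …, a_n/(z0+b_n))ᵀ`. -/
def xi0 (n : ℕ) (l0 : ℂ) : Idx n → ℂ :=
  Sum.elim (fun _ => 1)
    (fun k : Fin n => (aa n l0 k : ℂ) / (zz0 n l0 + (bb n l0 k : ℂ)))

/-- The vector `ξ_m = (0, a_1/(iζ+b_1)^{m+1}, …, a_n/(iζ+b_n)^{m+1})ᵀ` for `m ≥ 1`. -/
def xiv (n : ℕ) (l0 : ℂ) (m : ℕ) : Idx n → ℂ :=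
  Sum.elim (fun _ => 0)
    (fun k : Fin n => (aa n l0 k : ℂ) / (Complex.I * zeta n l0 + (bb n l0 k : ℂ)) ^ (m + 1))

/-- The matrix `S` whose columns are `ξ_0, ξ_1, …, ξ_n`. -/
def Smat (n : ℕ) (l0 : ℂ) : Matrix (Idx n) (Idx n) ℂ :=
  Matrix.of fun r c =>
    Sum.elim (fun _ : Fin 1 => xi0 n l0 r) (fun j : Fin n => xiv n l0 ((j : ℕ) + 1) r) c

/-!
The first row of `S` is `(1, 0, …, 0)`, so `det S` is the determinant of the `n × n` block
`a_k x_k^(j+2)`, where for `Re λ0 = 0` one has `x_k = 1/(iζ + ζ cot ω_k) = sin ω_k e^(-iω_k)/ζ`.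
Pulling `ζ^(-(j+1))` out of the columns and `y_k² / sin ω_k` out of the rows leaves a Vandermonde
determinant in `y_k = sin ω_k e^(-iω_k)`, and `y_j - y_i = e^(-i(ω_i+ω_j)) sin(ω_j - ω_i)`.
The phases multiply to `∏ₖ e^(-i(n+1)ω_k) = ∏ₖ (-1)^k`, and since
`sin((j-i)π/(n+1)) = sin ω_(n+1-(j-i))` the sines multiply to `∏ₖ (sin ω_k)^(k-1)`.
-/

theorem Matrix.det_of_mul_pow_add {R : Type*} [CommRing R] {n : ℕ} (c x : Fin n → R) (m : ℕ) :
    det (of fun i j : Fin n => c i * x i ^ ((j : ℕ) + m)) =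
      (∏ i, c i * x i ^ m) * ∏ i, ∏ j ∈ Ioi i, (x j - x i) := by
  rw [← det_vandermonde, ← det_mul_column]
  congr 1
  ext i j
  simp only [of_apply, vandermonde_apply, pow_add]
  ring

theorem Finset.prod_pow_two_mul_prod_prod_Ioi {M : Type*} [CommMonoid M] {n : ℕ} (f : Fin n → M) :
    (∏ i, f i ^ 2) * ∏ i, ∏ j ∈ Ioi i, f i * f j = ∏ i, f i ^ (n + 1) := by
  rw [prod_prod_Ioi_mul_eq_prod_prod_off_diag (fun _ i => f i), ← prod_mul_distrib]
  refine prod_congr rfl fun i _ => ?_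
  rw [prod_const, card_compl, card_singleton, Fintype.card_fin, ← pow_add]
  congr 1
  have := i.2
  omega

theorem Fin.prod_prod_Ioi_sub {M : Type*} [CommMonoid M] (g : ℕ → M) : ∀ n : ℕ,
    ∏ i : Fin n, ∏ j ∈ Ioi i, g (j - i) = ∏ m : Fin n, g (n - m) ^ (m : ℕ)
  | 0 => by simp
  | n + 1 => by
    have hrev : ∏ j : Fin n, g (j + 1) = ∏ m : Fin n, g (n - m) :=
      Fintype.prod_equiv Fin.revPerm _ _ fun j => by
        simp only [Fin.revPerm_apply, Fin.val_rev]
        congr 1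
        omega
    rw [Fin.prod_univ_succ, Fin.prod_Ioi_zero, Fin.prod_univ_succ]
    simp only [Fin.prod_Ioi_succ, Fin.val_succ, Fin.val_zero, Nat.add_sub_add_right,
      Nat.sub_zero, pow_zero, one_mul, pow_succ, prod_mul_distrib]
    rw [Fin.prod_prod_Ioi_sub g n, hrev, mul_comm]

theorem Fin.sum_val_add_one (n : ℕ) : ∑ k : Fin n, ((k : ℕ) + 1) = n * (n + 1) / 2 := by
  have h := sum_range_succ' (fun k => k) n
  rw [add_zero] at h
  rw [Fin.sum_univ_eq_sum_range (· + 1), ← h, sum_range_id, Nat.add_sub_cancel, mul_comm]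

theorem Complex.sin_mul_exp_sub_sin_mul_exp (a b : ℂ) :
    sin b * exp (-b * I) - sin a * exp (-a * I) = exp (-a * I) * exp (-b * I) * sin (b - a) := by
  simp only [Complex.sin, neg_mul, sub_mul, Complex.exp_sub, Complex.exp_neg]
  field_simp
  ring

theorem Complex.inv_I_mul_add_mul_cot (z θ : ℂ) (hθ : sin θ ≠ 0) :
    (I * z + z * (cos θ / sin θ))⁻¹ = sin θ * exp (-θ * I) / z := by
  rw [neg_mul, Complex.exp_neg, Complex.exp_mul_I]
  field_simp
  ring

section Angles

variable {n : ℕ}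

theorem sin_om_succ_pos (k : Fin n) : 0 < Real.sin (om n ((k : ℕ) + 1)) := by
  have hk : ((k : ℕ) : ℝ) + 1 < n + 1 := by exact_mod_cast Nat.succ_lt_succ k.2
  apply Real.sin_pos_of_pos_of_lt_pi
  · unfold om; positivity
  · rw [om, div_lt_iff₀ (by positivity)]
    push_cast
    nlinarith [Real.pi_pos]

theorem om_sub_om {i j : ℕ} (h : i ≤ j) : om n j - om n i = om n (j - i) := by
  simp only [om, Nat.cast_sub h]
  ring

theorem sin_om_sub_succ {m : ℕ} (h : m ≤ n) : Real.sin (om n (n - m)) = Real.sin (om n (m + 1)) := by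
  have : om n (n - m) = Real.pi - om n (m + 1) := by
    simp only [om, Nat.cast_sub h]
    push_cast
    field_simp
    ring
  rw [this, Real.sin_pi_sub]

theorem exp_neg_om_mul_I_pow (m : ℕ) : Complex.exp (-(om n m : ℂ) * I) ^ (n + 1) = (-1) ^ m := by
  rw [← Complex.exp_nat_mul]
  have : ((n + 1 : ℕ) : ℂ) * (-(om n m : ℂ) * I) = m * -(Real.pi * I) := by
    simp only [om]
    push_cast
    field_simp
  rw [this, Complex.exp_nat_mul, Complex.exp_neg, Complex.exp_pi_mul_I]
  norm_num

end Angles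

theorem det_sin_om_mul_exp_pow (n : ℕ) :
    det (of fun k j : Fin n =>
        (Real.sin (om n ((k : ℕ) + 1)) : ℂ)⁻¹ *
          ((Real.sin (om n ((k : ℕ) + 1)) : ℂ) * exp (-(om n ((k : ℕ) + 1) : ℂ) * I)) ^ ((j : ℕ) + 2)) =
      ∏ k : Fin n, (-(Real.sin (om n ((k : ℕ) + 1)) : ℂ)) ^ ((k : ℕ) + 1) := by
  set s : Fin n → ℂ := fun k => (Real.sin (om n ((k : ℕ) + 1)) : ℂ) with hs
  set e : Fin n → ℂ := fun k => exp (-(om n ((k : ℕ) + 1) : ℂ) * I) with he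
  have hdiag (k : Fin n) : (s k)⁻¹ * (s k * e k) ^ 2 = s k * e k ^ 2 := by
    have : s k ≠ 0 := Complex.ofReal_ne_zero.mpr (sin_om_succ_pos k).ne'
    field_simp
  have hdiff (i j : Fin n) (hij : i < j) :
      s j * e j - s i * e i = e i * e j * (Real.sin (om n (j - i)) : ℂ) := by
    rw [← Nat.add_sub_add_right (j : ℕ) 1 i, ← om_sub_om (by omega), Complex.ofReal_sin,
      Complex.ofReal_sub, ← Complex.sin_mul_exp_sub_sin_mul_exp]
    simp only [hs, he, Complex.ofReal_sin]
  have hsines : (∏ k, s k) * ∏ i : Fin n, ∏ j ∈ Ioi i, (Real.sin (om n (j - i)) : ℂ) =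
      ∏ k, s k ^ ((k : ℕ) + 1) := by
    rw [Fin.prod_prod_Ioi_sub (fun d => (Real.sin (om n d) : ℂ)), ← prod_mul_distrib]
    refine prod_congr rfl fun k _ => ?_
    rw [sin_om_sub_succ k.2.le, pow_succ']
  calc _ = (∏ k, (s k)⁻¹ * (s k * e k) ^ 2) * ∏ i, ∏ j ∈ Ioi i, (s j * e j - s i * e i) :=
        det_of_mul_pow_add _ _ 2
    _ = ((∏ k, e k ^ 2) * ∏ i, ∏ j ∈ Ioi i, e i * e j) *
          ((∏ k, s k) * ∏ i : Fin n, ∏ j ∈ Ioi i, (Real.sin (om n (j - i)) : ℂ)) := by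
        simp only [hdiag]
        rw [prod_congr rfl fun i _ => prod_congr rfl fun j hj => hdiff i j (mem_Ioi.mp hj)]
        simp only [prod_mul_distrib]
        ring
    _ = ∏ k, (-s k) ^ ((k : ℕ) + 1) := by
        rw [prod_pow_two_mul_prod_prod_Ioi, hsines, ← prod_mul_distrib]
        refine prod_congr rfl fun k _ => ?_
        rw [he, exp_neg_om_mul_I_pow, neg_pow (s k)]

theorem zeta_ne_zero {n : ℕ} {l0 : ℂ} (him : l0.im ≠ 0) : zeta n l0 ≠ 0 :=
  div_ne_zero (mul_ne_zero two_ne_zero him) (by positivity)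

theorem det_Smat_eq_det_block (n : ℕ) (l0 : ℂ) :
    (Smat n l0).det = det (of fun k j : Fin n =>
      (aa n l0 k : ℂ) / (I * zeta n l0 + bb n l0 k) ^ ((j : ℕ) + 2)) := by
  have hblocks : Smat n l0 = fromBlocks (of fun _ _ => 1) 0 (Smat n l0).toBlocks₂₁
      (of fun k j : Fin n => (aa n l0 k : ℂ) / (I * zeta n l0 + bb n l0 k) ^ ((j : ℕ) + 2)) := by
    ext (i | i) (j | j) <;> simp [Smat, xi0, xiv, toBlocks₂₁]
  rw [hblocks, det_fromBlocks_zero₁₂, det_unique]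
  simp

theorem aa_div_pow_eq {n : ℕ} {l0 : ℂ} (hre : l0.re = 0) (him : l0.im ≠ 0) (k : Fin n) (m : ℕ) :
    (aa n l0 k : ℂ) / (I * zeta n l0 + bb n l0 k) ^ (m + 2) =
      (zeta n l0 : ℂ)⁻¹ ^ (m + 1) *
        ((Real.sin (om n ((k : ℕ) + 1)) : ℂ)⁻¹ *
          ((Real.sin (om n ((k : ℕ) + 1)) : ℂ) * exp (-(om n ((k : ℕ) + 1) : ℂ) * I)) ^ (m + 2)) := by
  have hζ : (zeta n l0 : ℂ) ≠ 0 := ofReal_ne_zero.mpr (zeta_ne_zero him)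
  have hs : Complex.sin (om n ((k : ℕ) + 1)) ≠ 0 := by
    exact_mod_cast (sin_om_succ_pos k).ne'
  have hb : (bb n l0 k : ℂ) =
      zeta n l0 * (Complex.cos (om n ((k : ℕ) + 1)) / Complex.sin (om n ((k : ℕ) + 1))) := by
    simp [bb, hre]
  rw [div_eq_mul_inv, ← inv_pow, hb, Complex.inv_I_mul_add_mul_cot _ _ hs, aa]
  push_cast
  rw [div_pow, pow_succ _ (m + 1), inv_pow]
  field_simp
  ring

theorem det_Smat_of_re_eq_zero {n : ℕ} {l0 : ℂ} (hre : l0.re = 0) (him : l0.im ≠ 0) :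
    (Smat n l0).det =
      (-1 / (zeta n l0 : ℂ)) ^ (n * (n + 1) / 2) *
        ∏ j : Fin n, ((Real.sin (om n ((j : ℕ) + 1)) : ℂ)) ^ ((j : ℕ) + 1) := by
  simp only [det_Smat_eq_det_block, aa_div_pow_eq hre him]
  -- `erw`: `det_mul_row` writes the matrix as `of fun k j => v j * A k j`, with `A` under `of`
  erw [det_mul_row, det_sin_om_mul_exp_pow]
  rw [← Fin.sum_val_add_one, ← prod_pow_eq_pow_sum, ← prod_mul_distrib, ← prod_mul_distrib]
  refine prod_congr rfl fun k _ => ?_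
  rw [← mul_pow, ← mul_pow]
  ring

theorem stmt9_general (n : ℕ) (l0 : ℂ) (hre : l0.re = 0) (him : l0.im ≠ 0) :
    (Smat n l0).det =
      (-1 / (zeta n l0 : ℂ)) ^ (n * (n + 1) / 2) *
        ∏ j : Fin n, ((Real.sin (om n ((j : ℕ) + 1)) : ℂ)) ^ ((j : ℕ) + 1) ∧
    (Smat n l0).det ≠ 0 ∧
    LinearIndependent ℂ (fun c : Idx n => (Smat n l0)ᵀ c) := by
  have hne : (Smat n l0).det ≠ 0 := by
    rw [det_Smat_of_re_eq_zero hre him]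
    refine mul_ne_zero (pow_ne_zero _ (div_ne_zero (neg_ne_zero.mpr one_ne_zero) ?_))
      (prod_ne_zero_iff.mpr fun k _ => pow_ne_zero _ ?_)
    · exact ofReal_ne_zero.mpr (zeta_ne_zero him)
    · exact ofReal_ne_zero.mpr (sin_om_succ_pos k).ne'
  exact ⟨det_Smat_of_re_eq_zero hre him, hne,
    linearIndependent_cols_iff_isUnit.mpr ((isUnit_iff_isUnit_det _).mpr hne.isUnit)⟩

/-- `det S = (−1/ζ)^{n(n+1)/2}·∏_{j=1}^n (sin ω_j)^j ≠ 0`, so the columns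
`ξ_0, …, ξ_n` are linearly independent (form a basis of `ℂ^{n+1}`). -/
theorem stmt9 (n : ℕ) (hn : 1 ≤ n) (l0 : ℂ) (hre : l0.re = 0) (him : l0.im ≠ 0) :
    (Smat n l0).det =
      (-1 / (zeta n l0 : ℂ)) ^ (n * (n + 1) / 2) *
        ∏ j : Fin n, ((Real.sin (om n ((j : ℕ) + 1)) : ℂ)) ^ ((j : ℕ) + 1) ∧
    (Smat n l0).det ≠ 0 ∧
    LinearIndependent ℂ (fun c : Idx n => (Smat n l0)ᵀ c) :=
  stmt9_general n l0 hre him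

end
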